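/- arXiv:2306.05538 — 5 statements merged into one kernel-verified Lean document; each statement's English description precedes it below -/
import Mathlib

section
/- Let C_• = (C_0 ⊆ C_1 ⊆ ⋯ ⊆ C_k) be a simplicial flag of cones in ℝ_{≥0}×ℝⁿ, with C_{−1} = {0}. Let w_i ∈ C_i∖C_{i−1} and w'_i ∈ C_i∖C_{i−1} for 0 ≤ i ≤ k be two choices of points. Then for all 𝔲, 𝔳 ∈ ℝ^{1+n}: (⟨w_0,𝔲⟩,…,⟨w_k,𝔲⟩) ≤_lex (⟨w_0,𝔳⟩,…,⟨w_k,𝔳⟩) if and only if (⟨w'_0,𝔲⟩,…,⟨w'_k,𝔲⟩) ≤_lex (⟨w'_0,𝔳⟩,…,⟨w'_k,𝔳⟩). In other words, the preorder on ℝ^{1+n} defined by lexicographic comparison of pairings against the chosen points depends only on the flag, not on the choice of points. -/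
open Finset

noncomputable section

/-- The pairing `⟨w,𝔲⟩ = rγ + ⟨x,u⟩` on `ℝ × ℝⁿ`. -/
def pairE {n : ℕ} (w u : ℝ × (Fin n → ℝ)) : ℝ :=
  w.1 * u.1 + ∑ i, w.2 i * u.2 i

/-- The standard pairing between `ℝⁿ` and `ℤⁿ`. -/
def pairZ {n : ℕ} (x : Fin n → ℝ) (u : Fin n → ℤ) : ℝ :=
  ∑ i, x i * (u i : ℝ)

/-- The cone generated by finitely many vectors. -/
def coneGen {V : Type*} [AddCommMonoid V] [Module ℝ V] {r : ℕ} (v : Fin r → V) : Set V :=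
  {x | ∃ lam : Fin r → ℝ, (∀ j, 0 ≤ lam j) ∧ x = ∑ j, lam j • v j}

/-- The cone generated by `v 0, …, v i` (out of the family `v`). -/
def coneGenUpTo {V : Type*} [AddCommMonoid V] [Module ℝ V] {r : ℕ} (v : Fin r → V) (i : ℕ) :
    Set V :=
  {x | ∃ lam : Fin r → ℝ, (∀ j, 0 ≤ lam j) ∧ (∀ j : Fin r, i < (j : ℕ) → lam j = 0) ∧
    x = ∑ j, lam j • v j}

/-- A strongly convex polyhedral cone: finitely generated and containing no line. -/
def IsSCPCone {V : Type*} [AddCommGroup V] [Module ℝ V] (C : Set V) : Prop :=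
  (∃ r : ℕ, ∃ v : Fin r → V, C = coneGen v) ∧ ∀ x ∈ C, -x ∈ C → x = 0

/-- The dimension of a subset of a vector space: dimension of its linear span. -/
def spanDim {V : Type*} [AddCommGroup V] [Module ℝ V] (C : Set V) : ℕ :=
  Module.finrank ℝ (Submodule.span ℝ C)

/-- `flagPrev C i` is `C (i-1)`, with the convention `C (-1) = {0}`. -/
def flagPrev {V : Type*} [Zero V] (C : ℕ → Set V) : ℕ → Set V
  | 0 => {0}
  | (i + 1) => C i

/-- A flag of cones `C 0 ⊆ ⋯ ⊆ C k` in `ℝ≥0 × ℝⁿ`, with `dim (C i) = i + 1`. -/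
def IsFlagOfCones (n k : ℕ) (C : ℕ → Set (ℝ × (Fin n → ℝ))) : Prop :=
  (∀ i ≤ k, IsSCPCone (C i)) ∧
  (∀ i ≤ k, C i ⊆ {w | 0 ≤ w.1}) ∧
  (∀ i ≤ k, spanDim (C i) = i + 1) ∧
  (∀ i, i + 1 ≤ k → C i ⊆ C (i + 1))

/-- A simplicial flag of cones: a flag of cones in which `C i` is generated by
`v 0, …, v i` for a linearly independent family `v`. -/
def IsSimplicialFlagOfCones (n k : ℕ) (C : ℕ → Set (ℝ × (Fin n → ℝ))) : Prop :=
  IsFlagOfCones n k C ∧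
  ∃ v : Fin (k + 1) → ℝ × (Fin n → ℝ), LinearIndependent ℝ v ∧ ∀ i ≤ k, C i = coneGenUpTo v i

/-- A `Γ`-admissible cone in `ℝ≥0 × ℝⁿ`. -/
def IsGammaAdmissibleCone {n : ℕ} (Γ : AddSubgroup ℝ) (D : Set (ℝ × (Fin n → ℝ))) : Prop :=
  ∃ q : ℕ, ∃ γ : Fin q → ℝ, ∃ u : Fin q → (Fin n → ℤ), (∀ l, γ l ∈ Γ) ∧
    D = {w | 0 ≤ w.1 ∧ ∀ l, w.1 * γ l + pairZ w.2 (u l) ≤ 0}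

/-- A `Γ`-rational polyhedron in `ℝⁿ`. -/
def IsGammaRatPolyhedron {n : ℕ} (Γ : AddSubgroup ℝ) (Q : Set (Fin n → ℝ)) : Prop :=
  ∃ q : ℕ, ∃ u : Fin q → (Fin n → ℤ), ∃ γ : Fin q → ℝ, (∀ l, γ l ∈ Γ) ∧
    Q = {x | ∀ l, pairZ x (u l) ≤ γ l}

/-- A polyhedron in `ℝⁿ`: a finite intersection of closed affine half-spaces. -/
def IsPolyhedron {n : ℕ} (P : Set (Fin n → ℝ)) : Prop :=
  ∃ q : ℕ, ∃ a : Fin q → (Fin n → ℝ), ∃ b : Fin q → ℝ,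
    P = {x | ∀ l, ∑ i, a l i * x i ≤ b l}

/-- A set containing no affine line. -/
def HasNoLine {n : ℕ} (P : Set (Fin n → ℝ)) : Prop :=
  ¬ ∃ x d : Fin n → ℝ, d ≠ 0 ∧ ∀ t : ℝ, x + t • d ∈ P

/-- The dimension of a polyhedron: the dimension of its affine span. -/
def polyDim {n : ℕ} (P : Set (Fin n → ℝ)) : ℕ :=
  Module.finrank ℝ (affineSpan ℝ P).direction

/-- A flag of polyhedra `P 0 ⊆ ⋯ ⊆ P k` in `ℝⁿ`: nonempty polyhedra containing no affine
line, with `dim (P i) = i`. -/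
def IsFlagOfPolyhedra (n k : ℕ) (P : ℕ → Set (Fin n → ℝ)) : Prop :=
  (∀ i ≤ k, (P i).Nonempty ∧ IsPolyhedron (P i) ∧ HasNoLine (P i) ∧ polyDim (P i) = i) ∧
  (∀ i, i + 1 ≤ k → P i ⊆ P (i + 1))

/-- The closed cone over a subset of `ℝⁿ`. -/
def closedConeOver {n : ℕ} (P : Set (Fin n → ℝ)) : Set (ℝ × (Fin n → ℝ)) :=
  closure {w : ℝ × (Fin n → ℝ) | ∃ l : ℝ, ∃ x ∈ P, 0 < l ∧ w = (l, l • x)}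

/-- A `Γ`-rational polyhedral set: a finite union of `Γ`-rational polyhedra. -/
def IsGammaRatPolyhedralSet {n : ℕ} (Γ : AddSubgroup ℝ) (U : Set (Fin n → ℝ)) : Prop :=
  ∃ m : ℕ, ∃ Q : Fin m → Set (Fin n → ℝ), (∀ j, IsGammaRatPolyhedron Γ (Q j)) ∧ U = ⋃ j, Q j

/-- A `Γ`-rational polytope: a bounded `Γ`-rational polyhedron. -/
def IsGammaRatPolytope {n : ℕ} (Γ : AddSubgroup ℝ) (Q : Set (Fin n → ℝ)) : Prop :=
  IsGammaRatPolyhedron Γ Q ∧ Bornology.IsBounded Q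

/-- A `Γ`-rational polytopal set: a finite union of `Γ`-rational polytopes. -/
def IsGammaRatPolytopalSet {n : ℕ} (Γ : AddSubgroup ℝ) (U : Set (Fin n → ℝ)) : Prop :=
  ∃ m : ℕ, ∃ Q : Fin m → Set (Fin n → ℝ), (∀ j, IsGammaRatPolytope Γ (Q j)) ∧ U = ⋃ j, Q j

/-- A prime filter on a lattice `L` of sets (ordered by inclusion, with meet = intersection
and join = union). -/
def IsPrimeFilterOn {α : Type*} (L : Set (Set α)) (F : Set (Set α)) : Prop :=
  F ⊆ L ∧ F.Nonempty ∧ F ≠ L ∧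
  (∀ U ∈ F, ∀ V ∈ L, U ⊆ V → V ∈ F) ∧
  (∀ U ∈ F, ∀ V ∈ F, U ∩ V ∈ F) ∧
  (∀ U ∈ L, ∀ V ∈ L, U ∪ V ∈ F → U ∈ F ∨ V ∈ F)

/-- `D` is a `Γ`-admissible neighborhood of the flag of cones `C 0 ⊆ ⋯ ⊆ C k`. -/
def IsGammaAdmNbhd {n : ℕ} (Γ : AddSubgroup ℝ) (k : ℕ) (C : ℕ → Set (ℝ × (Fin n → ℝ)))
    (D : Set (ℝ × (Fin n → ℝ))) : Prop :=
  IsGammaAdmissibleCone Γ D ∧ ∀ i ≤ k, (D ∩ intrinsicInterior ℝ (C i)).Nonempty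

/-- `Q` is a `Γ`-rational neighborhood of the flag of polyhedra `P 0 ⊆ ⋯ ⊆ P k`. -/
def IsGammaRatNbhd {n : ℕ} (Γ : AddSubgroup ℝ) (k : ℕ) (P : ℕ → Set (Fin n → ℝ))
    (Q : Set (Fin n → ℝ)) : Prop :=
  IsGammaRatPolyhedron Γ Q ∧ ∀ i ≤ k, (Q ∩ intrinsicInterior ℝ (P i)).Nonempty

/-- The lexicographic comparison of pairings against points `w 0, …, w k`. -/
def lexRel (n k : ℕ) (w : ℕ → ℝ × (Fin n → ℝ)) (a b : ℝ × (Fin n → ℝ)) : Prop :=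
  toLex (fun i : Fin (k + 1) => pairE (w i) a) ≤ toLex (fun i : Fin (k + 1) => pairE (w i) b)

/-- The embedding of `Γ × ℤⁿ` into `ℝ × ℝⁿ`. -/
def embGZ {n : ℕ} (Γ : AddSubgroup ℝ) (a : Γ × (Fin n → ℤ)) : ℝ × (Fin n → ℝ) :=
  ((a.1 : ℝ), fun i => (a.2 i : ℝ))

/-- The preorder on `Γ × ℤⁿ` associated to a (simplicial flag of cones with) chosen points
`w 0, …, w k`. -/
def flagRel (n k : ℕ) (Γ : AddSubgroup ℝ) (w : ℕ → ℝ × (Fin n → ℝ))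
    (a b : Γ × (Fin n → ℤ)) : Prop :=
  lexRel n k w (embGZ Γ a) (embGZ Γ b)

/-- `w` is a choice of points for the flag `C`: `w i ∈ C i \ C (i-1)` for `i ≤ k`. -/
def IsChoiceOfPoints (n k : ℕ) (C : ℕ → Set (ℝ × (Fin n → ℝ)))
    (w : ℕ → ℝ × (Fin n → ℝ)) : Prop :=
  ∀ i ≤ k, w i ∈ C i \ flagPrev C i

/-- A valuated monomial preorder on `Γ × ℤⁿ`. -/
def IsValuatedMonomialPreorder {n : ℕ} (Γ : AddSubgroup ℝ)
    (r : (Γ × (Fin n → ℤ)) → (Γ × (Fin n → ℤ)) → Prop) : Prop :=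
  (∀ a, r a a) ∧ (∀ a b c, r a b → r b c → r a c) ∧ (∀ a b, r a b ∨ r b a) ∧
  (∀ a b c, r a b → r (a + c) (b + c)) ∧
  (∀ α β : Γ, (α : ℝ) ≤ (β : ℝ) → r (α, 0) (β, 0))

/-- A Chan–Maclagan preorder on `Γ × ℤⁿ`. -/
def IsChanMaclaganPreorder {n : ℕ} (Γ : AddSubgroup ℝ)
    (r : (Γ × (Fin n → ℤ)) → (Γ × (Fin n → ℤ)) → Prop) : Prop :=
  IsValuatedMonomialPreorder Γ r ∧ ∀ a, ∃ β : Γ, r (β, 0) a ∧ ¬ r a (β, 0)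

/-!
Write each chosen point as `w i = ∑_{j ≤ i} λ i j • v j` in the generators of the flag; the
condition `w i ∉ C (i-1)` forces `λ i i > 0`. The differences `⟨w i, b⟩ - ⟨w i, a⟩` are thus
obtained from `⟨v j, b⟩ - ⟨v j, a⟩` by a lower triangular matrix with positive diagonal, which
keeps the position and the sign of the first nonzero entry. So the comparison against any choice
of points agrees with the comparison against `v`.
-/

lemma pairE_sum {n m : ℕ} (c : Fin m → ℝ) (v : Fin m → ℝ × (Fin n → ℝ)) (u : ℝ × (Fin n → ℝ)) :
    pairE (∑ j, c j • v j) u = ∑ j, c j * pairE (v j) u := by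
  simp only [pairE, Prod.fst_sum, Prod.snd_sum, Finset.sum_apply, Prod.smul_fst, Prod.smul_snd,
    Pi.smul_apply, smul_eq_mul, Finset.sum_mul, mul_add, Finset.mul_sum, Finset.sum_add_distrib]
  rw [Finset.sum_comm (s := Finset.univ) (t := Finset.univ)]
  simp only [mul_assoc]

section Lex

variable {ι R : Type*} [LinearOrder ι]

lemma exists_ne_zero_forall_lt_eq_zero [WellFoundedLT ι] [Zero R] {d : ι → R} (hd : d ≠ 0) :
    ∃ i, d i ≠ 0 ∧ ∀ j < i, d j = 0 := by
  obtain ⟨i, hi, hmin⟩ := wellFounded_lt.has_min {i | d i ≠ 0} (Function.ne_iff.mp hd)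
  exact ⟨i, hi, fun j hj => not_not.mp fun hj0 => hmin j hj0 hj⟩

lemma zero_le_toLex_iff_of_forall_lt_eq_zero [Zero R] [PartialOrder R] {d : ι → R} {i : ι}
    (hz : ∀ j < i, d j = 0) (hi : d i ≠ 0) : toLex 0 ≤ toLex d ↔ 0 < d i := by
  refine ⟨fun h => ?_, fun h => Or.inr ⟨i, fun j hj => (hz j hj).symm, h⟩⟩
  rcases h with h | ⟨i', hz', hpos⟩
  · exact absurd (congrFun h i).symm hi
  · rcases lt_trichotomy i' i with hlt | rfl | hgt
    · exact absurd (hz i' hlt) hpos.ne'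
    · exact hpos
    · exact absurd (hz' i hgt).symm hi

variable [Fintype ι]

lemma sum_mul_eq_of_forall_lt_eq_zero [Semiring R] {lam : ι → ι → R}
    (hlam : ∀ i j, i < j → lam i j = 0) {d : ι → R} {i j : ι} (hz : ∀ m < i, d m = 0)
    (hji : j ≤ i) :
    ∑ m, lam j m * d m = lam j i * d i := by
  refine Finset.sum_eq_single i (fun m _ hm => ?_) (by simp)
  rcases hm.lt_or_gt with hlt | hgt
  · rw [hz m hlt, mul_zero]
  · rw [hlam j m (hji.trans_lt hgt), zero_mul]

lemma zero_le_toLex_lowerTriangular_iff [Ring R] [LinearOrder R] [IsStrictOrderedRing R]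
    {lam : ι → ι → R} (hlam : ∀ i j, i < j → lam i j = 0)
    (hdiag : ∀ i, 0 < lam i i) (d : ι → R) :
    toLex 0 ≤ toLex (fun i => ∑ j, lam i j * d j) ↔ toLex 0 ≤ toLex d := by
  rcases eq_or_ne d 0 with rfl | hd
  · simp only [Pi.zero_apply, mul_zero, Finset.sum_const_zero]
    exact Iff.rfl
  obtain ⟨i, hi, hz⟩ := exists_ne_zero_forall_lt_eq_zero hd
  have hei : ∑ j, lam i j * d j = lam i i * d i := sum_mul_eq_of_forall_lt_eq_zero hlam hz le_rfl
  have hez : ∀ j < i, ∑ m, lam j m * d m = 0 := fun j hj => by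
    rw [sum_mul_eq_of_forall_lt_eq_zero hlam hz hj.le, hlam j i hj, zero_mul]
  rw [zero_le_toLex_iff_of_forall_lt_eq_zero hz hi,
    zero_le_toLex_iff_of_forall_lt_eq_zero (d := fun i => ∑ j, lam i j * d j) hez
      (by rw [hei]; exact mul_ne_zero (hdiag i).ne' hi),
    hei, mul_pos_iff_of_pos_left (hdiag i)]

end Lex

lemma sum_smul_mem_flagPrev_coneGenUpTo {V : Type*} [AddCommMonoid V] [Module ℝ V] {r : ℕ}
    (v : Fin r → V) {i : ℕ} {lam : Fin r → ℝ} (hnn : ∀ j, 0 ≤ lam j)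
    (hlam : ∀ j : Fin r, i ≤ j → lam j = 0) :
    ∑ j, lam j • v j ∈ flagPrev (coneGenUpTo v) i := by
  cases i with
  | zero => simp [flagPrev, hlam]
  | succ m => exact ⟨lam, hnn, hlam, rfl⟩

lemma flagPrev_congr {V : Type*} [Zero V] {C D : ℕ → Set V} {k i : ℕ} (h : ∀ j ≤ k, C j = D j)
    (hi : i ≤ k) : flagPrev C i = flagPrev D i := by
  cases i with
  | zero => rfl
  | succ m => exact h m (by omega)

lemma IsChoiceOfPoints.exists_coeffs {n k : ℕ} {C : ℕ → Set (ℝ × (Fin n → ℝ))}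
    {v : Fin (k + 1) → ℝ × (Fin n → ℝ)} (hCv : ∀ i ≤ k, C i = coneGenUpTo v i)
    {w : ℕ → ℝ × (Fin n → ℝ)} (hw : IsChoiceOfPoints n k C w) (i : Fin (k + 1)) :
    ∃ lam : Fin (k + 1) → ℝ, (∀ j, i < j → lam j = 0) ∧ 0 < lam i ∧ w i = ∑ j, lam j • v j := by
  obtain ⟨hwi, hwi'⟩ := hw i i.is_le
  rw [hCv i i.is_le] at hwi
  rw [flagPrev_congr hCv i.is_le] at hwi'
  obtain ⟨lam, hnn, hlam, hsum⟩ := hwi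
  refine ⟨lam, hlam, (hnn i).lt_of_ne fun h0 => hwi' ?_, hsum⟩
  rw [hsum]
  refine sum_smul_mem_flagPrev_coneGenUpTo v hnn fun j hj => ?_
  rcases hj.lt_or_eq with hlt | heq
  · exact hlam j hlt
  · rw [← Fin.ext heq, h0]

lemma lexRel_iff_of_isChoiceOfPoints {n k : ℕ} {C : ℕ → Set (ℝ × (Fin n → ℝ))}
    {v : Fin (k + 1) → ℝ × (Fin n → ℝ)} (hCv : ∀ i ≤ k, C i = coneGenUpTo v i)
    {w : ℕ → ℝ × (Fin n → ℝ)} (hw : IsChoiceOfPoints n k C w) (a b : ℝ × (Fin n → ℝ)) :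
    lexRel n k w a b ↔ toLex 0 ≤ toLex fun j => pairE (v j) b - pairE (v j) a := by
  choose lam hlam hdiag hsum using hw.exists_coeffs hCv
  have hpair : ∀ i : Fin (k + 1), pairE (w i) b - pairE (w i) a =
      ∑ j, lam i j * (pairE (v j) b - pairE (v j) a) := fun i => by
    simp only [hsum i, pairE_sum, mul_sub, Finset.sum_sub_distrib]
  rw [lexRel, ← sub_nonneg, ← zero_le_toLex_lowerTriangular_iff hlam hdiag]
  exact iff_of_eq (congrArg _ (funext hpair))

/-- For a simplicial flag of cones `C 0 ⊆ ⋯ ⊆ C k` in `ℝ≥0 × ℝⁿ`, the preorder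
on `ℝ^{1+n}` given by lexicographic comparison of pairings against chosen points
`w i ∈ C i \ C (i-1)` does not depend on the choice of points. -/
theorem flag_preorder_independent_of_choice_of_points
    (n k : ℕ) (C : ℕ → Set (ℝ × (Fin n → ℝ)))
    (hC : IsSimplicialFlagOfCones n k C)
    (w w' : ℕ → ℝ × (Fin n → ℝ))
    (hw : IsChoiceOfPoints n k C w) (hw' : IsChoiceOfPoints n k C w') :
    ∀ a b : ℝ × (Fin n → ℝ), lexRel n k w a b ↔ lexRel n k w' a b := by
  obtain ⟨-, v, -, hCv⟩ := hC
  intro a b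
  rw [lexRel_iff_of_isChoiceOfPoints hCv hw, lexRel_iff_of_isChoiceOfPoints hCv hw']

end
end

section
/- Let C be a cone in ℝ^d and let u be a linear functional on ℝ^d with C ⊆ {x ∈ ℝ^d : u(x) ≤ 0}. Let B = C ∩ ker u and assume dim B = dim C − 1 (so B is a facet of C). Let B' be a cone with B' ⊆ B and dim B' = dim B, and let C' be a cone with C' ⊆ C, dim C' = dim C, and B' = C' ∩ ker u. Suppose v lies in the relative interior of B' and w lies in the relative interior of C. Then there exists a real number ε > 0 such that v + εw ∈ C'. -/
open Finset

noncomputable section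

/-!
Since `B` is a facet and `C'` is full-dimensional, `C'` contains a point `p` with `u p < 0`,
and then `span C = span B ⊕ ℝ p` by counting dimensions. Write `w = b + s p` with
`b ∈ span B`; as `w` lies in the relative interior of `C` and `u` does not vanish on `C`,
`u w < 0`, so `s > 0`. Since `span B' = span B` and `v` lies in the relative interior of `B'`,
`v + δ b ∈ B' ⊆ C'` for some `δ > 0`, hence `v + δ w = (v + δ b) + δ s p ∈ C'`.
-/

open Filter Topology Submodule

theorem vectorSpan_eq_span_of_zero_mem {k V : Type*} [Ring k] [AddCommGroup V] [Module k V]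
    {s : Set V} (hs : (0 : V) ∈ s) : vectorSpan k s = span k s := by
  simp [vectorSpan_eq_span_vsub_set_right k hs]

theorem exists_pos_add_smul_mem_of_mem_intrinsicInterior {V : Type*} [AddCommGroup V]
    [Module ℝ V] [TopologicalSpace V] [IsTopologicalAddGroup V] [ContinuousSMul ℝ V]
    {s : Set V} {x b : V} (hx : x ∈ intrinsicInterior ℝ s) (hb : b ∈ vectorSpan ℝ s) :
    ∃ δ : ℝ, 0 < δ ∧ x + δ • b ∈ s := by
  obtain ⟨y, hy, rfl⟩ := mem_intrinsicInterior.1 hx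
  have hline (t : ℝ) : (y : V) + t • b ∈ affineSpan ℝ s := by
    rw [add_comm]
    exact AffineSubspace.vadd_mem_of_mem_direction
      (by rw [direction_affineSpan]; exact smul_mem _ t hb) y.2
  let f : ℝ → affineSpan ℝ s := fun t => ⟨y + t • b, hline t⟩
  have hf : Continuous f := by fun_prop
  have hf0 : f 0 = y := by ext; simp [f]
  have hnear : ∀ᶠ t in 𝓝 0, f t ∈ interior ((↑) ⁻¹' s) :=
    hf.continuousAt.eventually_mem (hf0 ▸ isOpen_interior.mem_nhds hy)
  obtain ⟨δ, hδ, hmem⟩ := (eventually_mem_nhdsWithin.and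
    (hnear.filter_mono nhdsWithin_le_nhds) : ∀ᶠ t in 𝓝[>] (0 : ℝ), _).exists
  exact ⟨δ, hδ, interior_subset (s := ((↑) : affineSpan ℝ s → V) ⁻¹' s) hmem⟩

theorem LinearMap.apply_neg_of_mem_intrinsicInterior {V : Type*} [AddCommGroup V]
    [Module ℝ V] [TopologicalSpace V] [IsTopologicalAddGroup V] [ContinuousSMul ℝ V]
    {s : Set V} {u : V →ₗ[ℝ] ℝ} (hu : ∀ x ∈ s, u x ≤ 0) {p w : V} (hp : p ∈ s)
    (hup : u p < 0) (hw : w ∈ intrinsicInterior ℝ s) : u w < 0 := by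
  obtain ⟨δ, hδ, hmem⟩ := exists_pos_add_smul_mem_of_mem_intrinsicInterior hw
    (vsub_mem_vectorSpan ℝ (intrinsicInterior_subset hw) hp)
  have := hu _ hmem
  simp only [vsub_eq_sub, map_add, map_smul, map_sub, smul_eq_mul] at this
  nlinarith

theorem Submodule.sup_span_singleton_eq_of_le_ker {K V : Type*} [Field K] [AddCommGroup V]
    [Module K V] {N S : Submodule K V} [FiniteDimensional K S] {u : V →ₗ[K] K} {p : V}
    (hNS : N ≤ S) (hNu : N ≤ LinearMap.ker u) (hpS : p ∈ S) (hup : u p ≠ 0)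
    (hrank : Module.finrank K N = Module.finrank K S - 1) : N ⊔ K ∙ p = S := by
  have : FiniteDimensional K N := finiteDimensional_of_le hNS
  have hp0 : p ≠ 0 := by rintro rfl; simp at hup
  have hdisj : Disjoint N (K ∙ p) :=
    disjoint_span_singleton.2 fun hpN => absurd (hNu hpN) hup
  have hsup := finrank_sup_add_finrank_inf_eq N (K ∙ p)
  rw [disjoint_iff.1 hdisj, finrank_bot, finrank_span_singleton hp0] at hsup
  have hS := finrank_mono ((span_singleton_le_iff_mem p S).2 hpS)
  rw [finrank_span_singleton hp0] at hS
  exact eq_of_le_of_finrank_le (sup_le hNS ((span_singleton_le_iff_mem p S).2 hpS)) (by omega)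

theorem eq_zero_of_spanDim_eq_zero {V : Type*} [AddCommGroup V] [Module ℝ V]
    [FiniteDimensional ℝ V] {s : Set V} (hs : spanDim s = 0) {x : V} (hx : x ∈ s) : x = 0 :=
  span_eq_bot.1 (Submodule.finrank_eq_zero.1 hs) x hx

theorem exists_mem_neg_of_spanDim_inter_ker_lt {V : Type*} [AddCommGroup V] [Module ℝ V]
    {s : Set V} {u : V →ₗ[ℝ] ℝ} (hsu : s ⊆ {x | u x ≤ 0})
    (hdim : spanDim (s ∩ {x | u x = 0}) < spanDim s) : ∃ p ∈ s, u p < 0 := by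
  by_contra! h
  have hs : s ∩ {x | u x = 0} = s :=
    Set.inter_eq_left.2 fun x hx => le_antisymm (hsu hx) (h x hx)
  exact hdim.ne (congrArg spanDim hs)

theorem zero_mem_coneGen {V : Type*} [AddCommMonoid V] [Module ℝ V] {r : ℕ} (g : Fin r → V) :
    (0 : V) ∈ coneGen g :=
  ⟨0, fun _ => le_rfl, by simp⟩

theorem add_smul_mem_coneGen {V : Type*} [AddCommMonoid V] [Module ℝ V] {r : ℕ}
    {g : Fin r → V} {x y : V} (hx : x ∈ coneGen g) (hy : y ∈ coneGen g) {c : ℝ}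
    (hc : 0 ≤ c) :
    x + c • y ∈ coneGen g := by
  obtain ⟨a, ha, rfl⟩ := hx
  obtain ⟨b, hb, rfl⟩ := hy
  refine ⟨a + c • b, fun j => add_nonneg (ha j) (mul_nonneg hc (hb j)), ?_⟩
  simp [add_smul, mul_smul, Finset.sum_add_distrib, Finset.smul_sum]

theorem exists_pos_eps_add_smul_mem_subcone_general
    (d : ℕ) (C : Set (Fin d → ℝ))
    (u : (Fin d → ℝ) →ₗ[ℝ] ℝ) (hCu : C ⊆ {x | u x ≤ 0})
    (hfacet : spanDim (C ∩ {x | u x = 0}) = spanDim C - 1)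
    (B' : Set (Fin d → ℝ))
    (hB'sub : B' ⊆ C ∩ {x | u x = 0})
    (hB'dim : spanDim B' = spanDim (C ∩ {x | u x = 0}))
    (C' : Set (Fin d → ℝ)) (hC'cone : IsSCPCone C')
    (hC'sub : C' ⊆ C) (hC'dim : spanDim C' = spanDim C)
    (hB'C' : B' = C' ∩ {x | u x = 0})
    (v w : Fin d → ℝ)
    (hv : v ∈ intrinsicInterior ℝ B') (hw : w ∈ intrinsicInterior ℝ C) :
    ∃ ε : ℝ, 0 < ε ∧ v + ε • w ∈ C' := by
  obtain ⟨⟨_, g, rfl⟩, -⟩ := hC'cone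
  have hwC : w ∈ C := intrinsicInterior_subset hw
  have hB'C'sub : B' ⊆ coneGen g := hB'C' ▸ Set.inter_subset_left
  rcases Nat.eq_zero_or_pos (spanDim C) with hC0 | hCpos
  · refine ⟨1, one_pos, ?_⟩
    simpa [eq_zero_of_spanDim_eq_zero hC0 hwC] using hB'C'sub (intrinsicInterior_subset hv)
  obtain ⟨p, hpC', hup⟩ : ∃ p ∈ coneGen g, u p < 0 :=
    exists_mem_neg_of_spanDim_inter_ker_lt (fun x hx => hCu (hC'sub hx))
      (by rw [← hB'C']; omega)
  have hker : span ℝ (C ∩ {x | u x = 0}) ≤ LinearMap.ker u := span_le.2 fun _ hz => hz.2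
  have hspan : span ℝ (C ∩ {x | u x = 0}) ⊔ ℝ ∙ p = span ℝ C :=
    sup_span_singleton_eq_of_le_ker (span_mono Set.inter_subset_left) hker
      (subset_span (hC'sub hpC')) hup.ne hfacet
  obtain ⟨b, hb, _, hsp, rfl⟩ := mem_sup.1 (hspan ▸ subset_span hwC)
  obtain ⟨s, rfl⟩ := mem_span_singleton.1 hsp
  have hs : 0 < s := by
    have huw := u.apply_neg_of_mem_intrinsicInterior hCu (hC'sub hpC') hup hw
    simp only [map_add, map_smul, LinearMap.mem_ker.1 (hker hb), smul_eq_mul, zero_add]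
      at huw
    nlinarith
  have hbB' : b ∈ vectorSpan ℝ B' := by
    rwa [vectorSpan_eq_span_of_zero_mem (hB'C' ▸ ⟨zero_mem_coneGen g, map_zero u⟩),
      eq_of_le_of_finrank_eq (span_mono hB'sub) hB'dim]
  obtain ⟨δ, hδ, hvb⟩ := exists_pos_add_smul_mem_of_mem_intrinsicInterior hv hbB'
  refine ⟨δ, hδ, ?_⟩
  rw [smul_add, ← add_assoc, smul_smul]
  exact add_smul_mem_coneGen (hB'C'sub hvb) hpC' (mul_pos hδ hs).le

/-- Let `C` be a cone contained in `{u ≤ 0}`, `B = C ∩ ker u` a facet of `C`,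
`B' ⊆ B` a cone of full dimension in `B`, and `C' ⊆ C` a cone of full dimension in `C` with
`B' = C' ∩ ker u`. If `v` is in the relative interior of `B'` and `w` in the relative interior
of `C`, then `v + ε • w ∈ C'` for some `ε > 0`. -/
theorem exists_pos_eps_add_smul_mem_subcone
    (d : ℕ) (C : Set (Fin d → ℝ)) (hC : IsSCPCone C)
    (u : (Fin d → ℝ) →ₗ[ℝ] ℝ) (hCu : C ⊆ {x | u x ≤ 0})
    (hfacet : spanDim (C ∩ {x | u x = 0}) = spanDim C - 1)
    (B' : Set (Fin d → ℝ)) (hB'cone : IsSCPCone B')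
    (hB'sub : B' ⊆ C ∩ {x | u x = 0})
    (hB'dim : spanDim B' = spanDim (C ∩ {x | u x = 0}))
    (C' : Set (Fin d → ℝ)) (hC'cone : IsSCPCone C')
    (hC'sub : C' ⊆ C) (hC'dim : spanDim C' = spanDim C)
    (hB'C' : B' = C' ∩ {x | u x = 0})
    (v w : Fin d → ℝ)
    (hv : v ∈ intrinsicInterior ℝ B') (hw : w ∈ intrinsicInterior ℝ C) :
    ∃ ε : ℝ, 0 < ε ∧ v + ε • w ∈ C' :=
  exists_pos_eps_add_smul_mem_subcone_general d C u hCu hfacet B' hB'sub hB'dim C' hC'cone hC'sub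
    hC'dim hB'C' v w hv hw

end
end

section
/- Let v_0,…,v_k ∈ ℝ_{≥0}×ℝⁿ be linearly independent vectors, and for 0 ≤ i ≤ k let C_i be the cone generated by v_0,…,v_i. Let γ ∈ Γ, u ∈ ℤⁿ, and put 𝔲 = (γ,u) ∈ ℝ^{1+n}. Then (⟨v_0,𝔲⟩, ⟨v_1,𝔲⟩, …, ⟨v_k,𝔲⟩) ≤_lex (0,…,0) if and only if either there exists 0 ≤ i ≤ k−1 such that the relative interior of C_i is contained in {w ∈ ℝ^{1+n} : ⟨w,𝔲⟩ < 0}, or C_k ⊆ {w ∈ ℝ^{1+n} : ⟨w,𝔲⟩ ≤ 0}. -/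
open Finset

noncomputable section

/-!
For a linear functional `f` and a pointed cone `C`, the relative interior of `C` lies in
`{f < 0}` exactly when `f ≤ 0` on `C` and `f < 0` somewhere on `C`: a point of the relative
interior can be pushed slightly beyond any point of `C`, and adding a point of `C` to it keeps it
in the relative interior. For the cone generated by `v 0, …, v i` this says that the pairings
`⟨v j, 𝔲⟩`, `j ≤ i`, are nonpositive and one of them is negative. On the other side, the
pairing vector is lexicographically `≤ 0` iff its first nonzero entry, if any, is negative, which
is exactly that condition for some `i < k`, or nonpositivity of all entries.
-/

open Set Filter Topology

section IntrinsicInterior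

variable {V : Type*} [NormedAddCommGroup V] [NormedSpace ℝ V]

theorem exists_pos_add_smul_sub_mem_of_mem_intrinsicInterior {s : Set V} {x y : V}
    (hx : x ∈ intrinsicInterior ℝ s) (hy : y ∈ s) : ∃ ε > (0 : ℝ), x + ε • (x - y) ∈ s := by
  obtain ⟨x', hx', rfl⟩ := mem_intrinsicInterior.mp hx
  have hdir : (x' : V) - y ∈ (affineSpan ℝ s).direction :=
    AffineSubspace.vsub_mem_direction x'.2 (subset_affineSpan ℝ s hy)
  let g : ℝ → affineSpan ℝ s := fun t =>
    ⟨t • ((x' : V) - y) + x',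
      AffineSubspace.vadd_mem_of_mem_direction (Submodule.smul_mem _ t hdir) x'.2⟩
  have hg : Continuous g := by fun_prop
  have hev : ∀ᶠ t in 𝓝[>] (0 : ℝ), g t ∈ interior ((↑) ⁻¹' s : Set (affineSpan ℝ s)) :=
    nhdsWithin_le_nhds <|
      (hg.tendsto' 0 x' (by ext; simp [g])).eventually (isOpen_interior.mem_nhds hx')
  obtain ⟨ε, hgε, hε⟩ := (hev.and self_mem_nhdsWithin).exists
  refine ⟨ε, hε, ?_⟩
  rw [add_comm]
  exact (interior_subset hgε : g ε ∈ _)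

theorem AddSubmonoid.add_mem_intrinsicInterior (S : AddSubmonoid V) {x y : V}
    (hx : x ∈ intrinsicInterior ℝ (S : Set V)) (hy : y ∈ S) :
    x + y ∈ intrinsicInterior ℝ (S : Set V) := by
  obtain ⟨x', hx', rfl⟩ := mem_intrinsicInterior.mp hx
  have hdir : y ∈ (affineSpan ℝ (S : Set V)).direction := by
    simpa using AffineSubspace.vsub_mem_direction (subset_affineSpan ℝ _ hy)
      (subset_affineSpan ℝ _ S.zero_mem)
  have : Nonempty (affineSpan ℝ (S : Set V)) := ⟨x'⟩
  let T := (IsometryEquiv.constVAdd (X := affineSpan ℝ (S : Set V))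
    (⟨y, hdir⟩ : (affineSpan ℝ (S : Set V)).direction)).toHomeomorph
  have hT : T '' ((↑) ⁻¹' (S : Set V)) ⊆ (↑) ⁻¹' (S : Set V) := by
    rintro _ ⟨p, hp, rfl⟩
    exact S.add_mem hy hp
  refine mem_intrinsicInterior.mpr ⟨T x', interior_mono hT ?_, add_comm _ _⟩
  rw [← T.image_interior]
  exact mem_image_of_mem T hx'

theorem PointedCone.intrinsicInterior_subset_setOf_neg_iff [FiniteDimensional ℝ V]
    (C : PointedCone ℝ V) (f : V →ₗ[ℝ] ℝ) :
    intrinsicInterior ℝ (C : Set V) ⊆ {x | f x < 0} ↔ (∀ y ∈ C, f y ≤ 0) ∧ ∃ y ∈ C, f y < 0 := by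
  constructor
  · intro h
    obtain ⟨x, hx⟩ := Set.Nonempty.intrinsicInterior C.convex ⟨0, C.zero_mem⟩
    refine ⟨fun y hy => ?_, x, intrinsicInterior_subset hx, h hx⟩
    by_contra! hy_pos
    -- `f` vanishes at `x + t • y` for `t = -f x / f y ≥ 0`, a point of the relative interior.
    have hxy := h <| C.toAddSubmonoid.add_mem_intrinsicInterior hx <|
      C.smul_mem (div_nonneg (neg_nonneg.mpr (h hx).le) hy_pos.le) hy
    simp only [mem_ofPred_eq, map_add, map_smul, smul_eq_mul, div_mul_cancel₀ _ hy_pos.ne'] at hxy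
    linarith
  · rintro ⟨hle, y, hy, hy_neg⟩ x hx
    obtain ⟨ε, hε, hmem⟩ := exists_pos_add_smul_sub_mem_of_mem_intrinsicInterior hx hy
    have := hle _ hmem
    simp only [map_add, map_smul, map_sub, smul_eq_mul] at this
    show f x < 0
    nlinarith

end IntrinsicInterior

section ConeGenUpTo

variable {V : Type*} [AddCommGroup V] [Module ℝ V] {r : ℕ}

def pointedConeGenUpTo (v : Fin r → V) (i : ℕ) : PointedCone ℝ V where
  carrier := coneGenUpTo v i
  zero_mem' := ⟨0, fun _ => le_rfl, fun _ _ => rfl, by simp⟩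
  add_mem' := by
    rintro _ _ ⟨a, ha, ha', rfl⟩ ⟨b, hb, hb', rfl⟩
    exact ⟨a + b, fun j => add_nonneg (ha j) (hb j), fun j hj => by simp [ha' j hj, hb' j hj],
      by simp [add_smul, sum_add_distrib]⟩
  smul_mem' := by
    rintro c _ ⟨a, ha, ha', rfl⟩
    exact ⟨(c : ℝ) • a, fun j => mul_nonneg c.2 (ha j), fun j hj => by simp [ha' j hj],
      by simp [← Nonneg.coe_smul, smul_sum, smul_smul]⟩

variable {v : Fin r → V} {i : ℕ}

theorem mem_coneGenUpTo_of_le {j : Fin r} (hj : (j : ℕ) ≤ i) : v j ∈ coneGenUpTo v i :=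
  ⟨Pi.single j 1, fun _ => by simp [Pi.single_apply]; split_ifs <;> norm_num,
    fun l hl => Pi.single_eq_of_ne (by rintro rfl; omega) _, by simp [Pi.single_apply]⟩

variable (f : V →ₗ[ℝ] ℝ)

theorem forall_mem_coneGenUpTo_nonpos_iff :
    (∀ y ∈ coneGenUpTo v i, f y ≤ 0) ↔ ∀ j : Fin r, (j : ℕ) ≤ i → f (v j) ≤ 0 := by
  refine ⟨fun h j hj => h _ (mem_coneGenUpTo_of_le hj), ?_⟩
  rintro h _ ⟨a, ha, ha', rfl⟩
  simp only [map_sum, map_smul, smul_eq_mul]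
  refine sum_nonpos fun j _ => ?_
  by_cases hj : (j : ℕ) ≤ i
  · exact mul_nonpos_of_nonneg_of_nonpos (ha j) (h j hj)
  · simp [ha' j (not_le.mp hj)]

theorem exists_mem_coneGenUpTo_neg_iff :
    (∃ y ∈ coneGenUpTo v i, f y < 0) ↔ ∃ j : Fin r, (j : ℕ) ≤ i ∧ f (v j) < 0 := by
  refine ⟨?_, fun ⟨j, hj, hneg⟩ => ⟨_, mem_coneGenUpTo_of_le hj, hneg⟩⟩
  rintro ⟨_, ⟨a, ha, ha', rfl⟩, hneg⟩
  simp only [map_sum, map_smul, smul_eq_mul] at hneg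
  obtain ⟨j, -, hj⟩ := exists_lt_of_sum_lt (g := fun _ => (0 : ℝ)) (by simpa using hneg)
  refine ⟨j, not_lt.mp fun hij => ?_, neg_of_mul_neg_right hj (ha j)⟩
  simp [ha' j hij] at hj

end ConeGenUpTo

theorem intrinsicInterior_coneGenUpTo_subset_iff {V : Type*} [NormedAddCommGroup V]
    [NormedSpace ℝ V] [FiniteDimensional ℝ V] {r : ℕ} (v : Fin r → V) (i : ℕ)
    (f : V →ₗ[ℝ] ℝ) :
    intrinsicInterior ℝ (coneGenUpTo v i) ⊆ {x | f x < 0} ↔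
      (∀ j : Fin r, (j : ℕ) ≤ i → f (v j) ≤ 0) ∧ ∃ j : Fin r, (j : ℕ) ≤ i ∧ f (v j) < 0 := by
  rw [← forall_mem_coneGenUpTo_nonpos_iff, ← exists_mem_coneGenUpTo_neg_iff]
  exact (pointedConeGenUpTo v i).intrinsicInterior_subset_setOf_neg_iff f

theorem Pi.toLex_lt_zero_of_nonpos_of_neg {ι α : Type*} [LinearOrder ι] [WellFoundedLT ι]
    [LinearOrder α] [Zero α] {p : ι → α} {i : ι} (hle : ∀ j < i, p j ≤ 0) (hi : p i < 0) :
    toLex p < toLex 0 := by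
  obtain ⟨m, hmi, hm⟩ := exists_minimal_le_of_wellFoundedLT (fun j => p j < 0) i hi
  exact ⟨m, fun j hj => le_antisymm (hle j (hj.trans_le hmi)) (not_lt.mp (hm.not_prop_of_lt hj)),
    hm.prop⟩

theorem Fin.toLex_le_zero_iff {α : Type*} [LinearOrder α] [Zero α] {k : ℕ}
    (p : Fin (k + 1) → α) :
    toLex p ≤ toLex 0 ↔
      (∃ i : ℕ, i < k ∧ (∀ j : Fin (k + 1), (j : ℕ) ≤ i → p j ≤ 0) ∧
        ∃ j : Fin (k + 1), (j : ℕ) ≤ i ∧ p j < 0) ∨ ∀ j, p j ≤ 0 := by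
  have nonpos_of_le {m : Fin (k + 1)} (hpre : ∀ j < m, p j = 0) (hm : p m < 0)
      {j : Fin (k + 1)} (hj : j ≤ m) : p j ≤ 0 :=
    hj.lt_or_eq.elim (fun h => (hpre j h).le) (fun h => h ▸ hm.le)
  rw [le_iff_lt_or_eq]
  constructor
  · rintro (⟨m, hpre, hm⟩ | hp)
    · by_cases hmk : (m : ℕ) < k
      · exact Or.inl ⟨m, hmk, fun j hj => nonpos_of_le hpre hm hj, m, le_rfl, hm⟩
      · exact Or.inr fun j => nonpos_of_le hpre hm (Fin.le_def.mpr (by omega))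
    · exact Or.inr fun j => (congrFun (toLex.injective hp) j).le
  · rintro (⟨i, -, hle, j, hj, hneg⟩ | hle)
    · exact Or.inl (Pi.toLex_lt_zero_of_nonpos_of_neg (fun l hl => hle l (by omega)) hneg)
    · by_cases hneg : ∃ j, p j < 0
      · obtain ⟨j, hj⟩ := hneg
        exact Or.inl (Pi.toLex_lt_zero_of_nonpos_of_neg (fun l _ => hle l) hj)
      · push Not at hneg
        exact Or.inr (congrArg toLex (funext fun j => le_antisymm (hle j) (hneg j)))

def pairEₗ {n : ℕ} (u : ℝ × (Fin n → ℝ)) : (ℝ × (Fin n → ℝ)) →ₗ[ℝ] ℝ where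
  toFun w := pairE w u
  map_add' w w' := by
    simp only [pairE, Prod.fst_add, Prod.snd_add, Pi.add_apply, add_mul, sum_add_distrib]
    ring
  map_smul' c w := by
    simp only [pairE, Prod.smul_fst, Prod.smul_snd, Pi.smul_apply, smul_eq_mul, RingHom.id_apply,
      mul_add, mul_sum, mul_assoc]

theorem lex_nonpos_iff_flag_geometric_conditions_general
    (n k : ℕ)
    (v : Fin (k + 1) → ℝ × (Fin n → ℝ))
    (γ : ℝ) (u : Fin n → ℤ) :
    (toLex (fun i : Fin (k + 1) => pairE (v i) (γ, fun t => (u t : ℝ))) ≤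
        toLex (0 : Fin (k + 1) → ℝ)) ↔
      ((∃ i : ℕ, i < k ∧ intrinsicInterior ℝ (coneGenUpTo v i) ⊆
          {w : ℝ × (Fin n → ℝ) | pairE w (γ, fun t => (u t : ℝ)) < 0}) ∨
        coneGenUpTo v k ⊆ {w : ℝ × (Fin n → ℝ) | pairE w (γ, fun t => (u t : ℝ)) ≤ 0}) := by
  have hcone (i : ℕ) :=
    intrinsicInterior_coneGenUpTo_subset_iff v i (pairEₗ (γ, fun t => (u t : ℝ)))
  have hlast := forall_mem_coneGenUpTo_nonpos_iff (v := v) (i := k) (pairEₗ (γ, fun t => (u t : ℝ)))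
  simp only [Fin.is_le, forall_const] at hlast
  rw [Fin.toLex_le_zero_iff]
  exact or_congr (exists_congr fun i => and_congr_right fun _ => (hcone i).symm) hlast.symm

/-- For linearly independent `v 0, …, v k` in `ℝ≥0 × ℝⁿ` and `𝔲 = (γ,u) ∈ Γ×ℤⁿ`,
the vector of pairings `(⟨v 0,𝔲⟩, …, ⟨v k,𝔲⟩)` is lexicographically `≤ 0` iff either the
relative interior of some `C i` (`i ≤ k-1`) lies in `{⟨·,𝔲⟩ < 0}`, or `C k ⊆ {⟨·,𝔲⟩ ≤ 0}`. -/
theorem lex_nonpos_iff_flag_geometric_conditions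
    (n k : ℕ) (hn : 1 ≤ n) (Γ : AddSubgroup ℝ) (hΓ : Γ ≠ ⊥)
    (v : Fin (k + 1) → ℝ × (Fin n → ℝ)) (hv : LinearIndependent ℝ v)
    (hvpos : ∀ i, 0 ≤ (v i).1)
    (γ : ℝ) (hγ : γ ∈ Γ) (u : Fin n → ℤ) :
    (toLex (fun i : Fin (k + 1) => pairE (v i) (γ, fun t => (u t : ℝ))) ≤
        toLex (0 : Fin (k + 1) → ℝ)) ↔
      ((∃ i : ℕ, i < k ∧ intrinsicInterior ℝ (coneGenUpTo v i) ⊆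
          {w : ℝ × (Fin n → ℝ) | pairE w (γ, fun t => (u t : ℝ)) < 0}) ∨
        coneGenUpTo v k ⊆ {w : ℝ × (Fin n → ℝ) | pairE w (γ, fun t => (u t : ℝ)) ≤ 0}) :=
  lex_nonpos_iff_flag_geometric_conditions_general n k v γ u

end
end

section
/- Let v_0,…,v_k ∈ ℝ_{≥0}×ℝⁿ be linearly independent vectors, for 0 ≤ i ≤ k let C_i be the cone generated by v_0,…,v_i, and let Ũ be a Γ-admissible cone. Then the following are equivalent: (a) there exist finitely many pairs 𝔲_1,…,𝔲_q ∈ Γ×ℤⁿ such that (⟨v_0,𝔲_l⟩,…,⟨v_k,𝔲_l⟩) ≤_lex (0,…,0) for every 1 ≤ l ≤ q and {w ∈ ℝ_{≥0}×ℝⁿ : ⟨w,𝔲_l⟩ ≤ 0 for all 1 ≤ l ≤ q} ⊆ Ũ; (b) Ũ meets the relative interior of C_i for every 0 ≤ i ≤ k. -/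
open Finset

noncomputable section

/-!
(a) ⇒ (b): if every `𝔲_l` is lexicographically nonpositive on `v_0, …, v_k`, take the point
`∑_{j ≤ i} εʲ v_j` of the relative interior of `C_i`. For small `ε > 0` it pairs nonpositively
with every `𝔲_l`, since the sign of `∑_{j ≤ i} εʲ ⟨v_j, 𝔲⟩` is then that of its first nonzero
coefficient.

(b) ⇒ (a): the inequalities `⟨·, 𝔲⟩ ≤ 0` defining `Ũ` already work. If the first nonzero
`⟨v_j, 𝔲⟩` were positive, at `j = j₀`, then `⟨·, 𝔲⟩` would be nonnegative on `C_{j₀}` and `≤ 0`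
at a relative interior point of `C_{j₀}` lying in `Ũ`. A linear functional minimized over a set
at a relative interior point is constant on it, contradicting `⟨v_{j₀}, 𝔲⟩ > 0`.
-/

open Filter Topology

theorem Fin.toLex_le_zero_cases {m : ℕ} {x : Fin (m + 1) → ℝ} (hx : toLex x ≤ toLex 0) :
    x 0 < 0 ∨ x 0 = 0 ∧ toLex (Fin.tail x) ≤ toLex 0 := by
  rcases hx.lt_or_eq with hlt | heq
  · have hcons : Pi.Lex (· < ·) (· < ·) (Fin.cons (x 0) (Fin.tail x) : Fin (m + 1) → ℝ)
        (Fin.cons ((0 : Fin (m + 1) → ℝ) 0) (Fin.tail (0 : Fin (m + 1) → ℝ))) := by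
      rw [Fin.cons_self_tail, Fin.cons_self_tail]
      exact hlt
    rcases (Fin.pi_lex_lt_cons_cons _).1 hcons with h | ⟨h, htail⟩
    · exact Or.inl h
    · exact Or.inr ⟨h, (show toLex (Fin.tail x) < toLex 0 from htail).le⟩
  · obtain rfl : x = 0 := toLex.injective heq
    exact Or.inr ⟨rfl, le_rfl⟩

theorem toLex_ite_le_zero {m : ℕ} {x : Fin m → ℝ} (hx : toLex x ≤ toLex 0) (i : ℕ) :
    toLex (fun j : Fin m => if (j : ℕ) ≤ i then x j else 0) ≤ toLex 0 := by
  rcases hx.lt_or_eq with ⟨j₀, hbelow, hneg⟩ | heq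
  · simp only [Pi.toLex_apply, Pi.zero_apply] at hbelow hneg
    by_cases hj₀ : (j₀ : ℕ) ≤ i
    · refine le_of_lt ⟨j₀, fun j hj => ?_, by simpa [hj₀] using hneg⟩
      simp [hbelow j hj]
    · refine le_of_eq (congrArg toLex (funext fun j => ?_))
      by_cases hj : (j : ℕ) ≤ i
      · simpa [hj] using hbelow j (by omega)
      · simp [hj]
  · exact le_of_eq (congrArg toLex (funext fun j => by simp [toLex.injective heq]))

theorem eventually_sum_pow_mul_nonpos_of_toLex_le_zero :
    ∀ {m : ℕ} {x : Fin m → ℝ}, toLex x ≤ toLex 0 →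
      ∀ᶠ ε in 𝓝[>] (0 : ℝ), ∑ j : Fin m, ε ^ (j : ℕ) * x j ≤ 0
  | 0, _, _ => by simp
  | m + 1, x, hx => by
    have hsplit : ∀ ε : ℝ, ∑ j : Fin (m + 1), ε ^ (j : ℕ) * x j =
        x 0 + ε * ∑ j : Fin m, ε ^ (j : ℕ) * Fin.tail x j := by
      intro ε
      simp only [Fin.sum_univ_succ, Fin.val_zero, pow_zero, one_mul, Fin.val_succ, pow_succ,
        Finset.mul_sum, Fin.tail]
      ring_nf
    simp only [hsplit]
    rcases Fin.toLex_le_zero_cases hx with hneg | ⟨hzero, htail⟩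
    · have hlim : Tendsto (fun ε : ℝ => x 0 + ε * ∑ j : Fin m, ε ^ (j : ℕ) * Fin.tail x j)
          (𝓝 0) (𝓝 (x 0)) := by
        have : Continuous fun ε : ℝ => x 0 + ε * ∑ j : Fin m, ε ^ (j : ℕ) * Fin.tail x j := by
          fun_prop
        simpa using this.tendsto 0
      exact nhdsWithin_le_nhds ((hlim.eventually (gt_mem_nhds hneg)).mono fun _ h => h.le)
    · filter_upwards [eventually_sum_pow_mul_nonpos_of_toLex_le_zero htail, self_mem_nhdsWithin]
        with ε htailε hε
      rw [hzero, zero_add]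
      exact mul_nonpos_of_nonneg_of_nonpos (le_of_lt hε) htailε

section IntrinsicInterior

variable {V : Type*} [AddCommGroup V] [Module ℝ V] [TopologicalSpace V]

theorem mem_intrinsicInterior_of_isOpen {s O : Set V} {x : V} (hO : IsOpen O) (hxO : x ∈ O)
    (hxs : x ∈ s) (hOs : ∀ y ∈ affineSpan ℝ s, y ∈ O → y ∈ s) :
    x ∈ intrinsicInterior ℝ s := by
  refine mem_intrinsicInterior.2 ⟨⟨x, subset_affineSpan ℝ s hxs⟩, ?_, rfl⟩
  exact interior_maximal (t := ((↑) : affineSpan ℝ s → V) ⁻¹' O) (fun y hy => hOs y y.2 hy)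
    (hO.preimage continuous_subtype_val) hxO

variable [IsTopologicalAddGroup V] [ContinuousSMul ℝ V]

theorem exists_one_lt_lineMap_mem_of_mem_intrinsicInterior {s : Set V} {w y : V}
    (hw : w ∈ intrinsicInterior ℝ s) (hy : y ∈ s) :
    ∃ t : ℝ, 1 < t ∧ AffineMap.lineMap y w t ∈ s := by
  obtain ⟨w', hw', rfl⟩ := mem_intrinsicInterior.1 hw
  let g : ℝ → affineSpan ℝ s := fun t =>
    ⟨AffineMap.lineMap y w' t, AffineMap.lineMap_mem t (subset_affineSpan ℝ s hy) w'.2⟩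
  have hg : Continuous g :=
    (AffineMap.lineMap_continuous.comp continuous_id).subtype_mk _
  have hg1 : g 1 = w' := Subtype.ext (AffineMap.lineMap_apply_one _ _)
  have hev : ∀ᶠ t in 𝓝 (1 : ℝ), g t ∈ interior ((↑) ⁻¹' s) :=
    hg.continuousAt.preimage_mem_nhds (by rw [hg1]; exact isOpen_interior.mem_nhds hw')
  obtain ⟨t, ht, hts⟩ := hev.exists_gt
  exact ⟨t, ht, interior_subset (s := ((↑) : affineSpan ℝ s → V) ⁻¹' s) hts⟩

theorem LinearMap.eq_of_isMinOn_of_mem_intrinsicInterior (f : V →ₗ[ℝ] ℝ) {s : Set V} {w y : V}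
    (hmin : IsMinOn f s w) (hw : w ∈ intrinsicInterior ℝ s) (hy : y ∈ s) : f y = f w := by
  obtain ⟨t, ht, hts⟩ := exists_one_lt_lineMap_mem_of_mem_intrinsicInterior hw hy
  have hline : f (AffineMap.lineMap y w t) = f y + t * (f w - f y) := by
    simp only [AffineMap.lineMap_apply_module, map_add, map_smul, smul_eq_mul]
    ring
  have h1 : f w ≤ f (AffineMap.lineMap y w t) := hmin hts
  have h2 : f w ≤ f y := hmin hy
  rw [hline] at h1
  nlinarith

end IntrinsicInterior

theorem LinearIndependent.exists_linearMap_apply_sum_smul {K ι V : Type*} [DivisionRing K]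
    [Fintype ι] [AddCommGroup V] [Module K V] {v : ι → V} (hv : LinearIndependent K v) :
    ∃ g : V →ₗ[K] ι → K, ∀ c : ι → K, g (∑ j, c j • v j) = c := by
  obtain ⟨g, hg⟩ := (Fintype.linearCombination K v).exists_leftInverse_of_injective
    (LinearMap.ker_eq_bot.2 hv.fintypeLinearCombination_injective)
  exact ⟨g, fun c => by simpa [Fintype.linearCombination_apply] using LinearMap.congr_fun hg c⟩

section Cone

variable {V : Type*} [AddCommGroup V] [Module ℝ V] {r : ℕ}

theorem self_mem_coneGenUpTo (v : Fin r → V) (j : Fin r) : v j ∈ coneGenUpTo v j := by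
  refine ⟨Pi.single j 1, (Pi.single_nonneg.2 zero_le_one : (0 : Fin r → ℝ) ≤ Pi.single j 1),
    fun t ht => ?_, ?_⟩
  · exact Pi.single_eq_of_ne (by rintro rfl; omega) _
  · simp [Pi.single_apply, ite_smul]

theorem LinearMap.apply_nonneg_of_mem_coneGenUpTo (f : V →ₗ[ℝ] ℝ) {v : Fin r → V} {i : ℕ}
    (hf : ∀ j : Fin r, (j : ℕ) ≤ i → 0 ≤ f (v j)) {z : V} (hz : z ∈ coneGenUpTo v i) :
    0 ≤ f z := by
  obtain ⟨lam, hlam, hlam0, rfl⟩ := hz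
  rw [map_sum]
  refine Finset.sum_nonneg fun j _ => ?_
  rw [map_smul, smul_eq_mul]
  rcases le_or_gt (j : ℕ) i with h | h
  · exact mul_nonneg (hlam j) (hf j h)
  · rw [hlam0 j h, zero_mul]

variable [TopologicalSpace V] [IsTopologicalAddGroup V] [ContinuousSMul ℝ V]

theorem sum_smul_mem_intrinsicInterior_coneGenUpTo [T2Space V] [FiniteDimensional ℝ V]
    {v : Fin r → V} (hv : LinearIndependent ℝ v) {i : ℕ} {c : Fin r → ℝ}
    (hpos : ∀ j : Fin r, (j : ℕ) ≤ i → 0 < c j) (hzero : ∀ j : Fin r, i < (j : ℕ) → c j = 0) :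
    ∑ j, c j • v j ∈ intrinsicInterior ℝ (coneGenUpTo v i) := by
  obtain ⟨g, hg⟩ := hv.exists_linearMap_apply_sum_smul
  have hg_cont : Continuous g := g.continuous_of_finiteDimensional
  let W : Submodule ℝ (Fin r → ℝ) := Submodule.pi {j | i < (j : ℕ)} fun _ => ⊥
  have hspan : Submodule.span ℝ (coneGenUpTo v i) ≤ W.map (Fintype.linearCombination ℝ v) := by
    refine Submodule.span_le.2 ?_
    rintro _ ⟨lam, -, hlam0, rfl⟩
    exact ⟨lam, by simpa [W] using hlam0, Fintype.linearCombination_apply _ _ _⟩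
  have hO : IsOpen {x : V | ∀ j : Fin r, (j : ℕ) ≤ i → 0 < g x j} := by
    simp only [Set.ofPred_forall]
    exact isOpen_iInter_of_finite fun j => isOpen_iInter_of_finite fun _ =>
      isOpen_lt continuous_const ((continuous_apply j).comp hg_cont)
  refine mem_intrinsicInterior_of_isOpen hO (by simpa [hg] using hpos)
    ⟨c, fun j => ?_, hzero, rfl⟩ fun y hy hyO => ?_
  · rcases le_or_gt (j : ℕ) i with h | h
    · exact (hpos j h).le
    · exact (hzero j h).ge
  · obtain ⟨d, hdW, rfl⟩ := hspan (affineSpan_subset_span hy)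
    rw [Fintype.linearCombination_apply] at hyO ⊢
    simp only [Set.mem_ofPred_eq, hg] at hyO
    have hd : ∀ j : Fin r, i < (j : ℕ) → d j = 0 := by simpa [W] using hdW
    refine ⟨d, fun j => ?_, hd, rfl⟩
    rcases le_or_gt (j : ℕ) i with h | h
    · exact (hyO j h).le
    · exact (hd j h).ge

theorem toLex_le_zero_of_forall_exists_mem_intrinsicInterior_coneGenUpTo (f : V →ₗ[ℝ] ℝ)
    {v : Fin r → V} (h : ∀ i < r, ∃ w ∈ intrinsicInterior ℝ (coneGenUpTo v i), f w ≤ 0) :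
    toLex (fun j => f (v j)) ≤ toLex 0 := by
  by_contra hlex
  obtain ⟨j₀, hbelow, hpos⟩ : toLex 0 < toLex (fun j => f (v j)) := not_le.1 hlex
  simp only [Pi.toLex_apply, Pi.zero_apply] at hbelow hpos
  obtain ⟨w, hw, hfw⟩ := h j₀ j₀.isLt
  have hmin : IsMinOn f (coneGenUpTo v j₀) w := fun z hz =>
    hfw.trans <| f.apply_nonneg_of_mem_coneGenUpTo (fun j hj => by
      rcases (Fin.le_iff_val_le_val.2 hj).lt_or_eq with hlt | rfl
      · exact (hbelow j hlt).le
      · exact hpos.le) hz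
  have hconst := f.eq_of_isMinOn_of_mem_intrinsicInterior hmin hw (self_mem_coneGenUpTo v j₀)
  linarith

theorem exists_mem_intrinsicInterior_coneGenUpTo_forall_le_zero [T2Space V]
    [FiniteDimensional ℝ V] {v : Fin r → V} (hv : LinearIndependent ℝ v) {q : ℕ}
    (f : Fin q → V →ₗ[ℝ] ℝ)
    (hf : ∀ l, toLex (fun j => f l (v j)) ≤ toLex 0) (i : ℕ) :
    ∃ w ∈ intrinsicInterior ℝ (coneGenUpTo v i), ∀ l, f l w ≤ 0 := by
  have hev : ∀ᶠ ε in 𝓝[>] (0 : ℝ), ∀ l,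
      ∑ j : Fin r, ε ^ (j : ℕ) * (if (j : ℕ) ≤ i then f l (v j) else 0) ≤ 0 :=
    eventually_all.2 fun l =>
      eventually_sum_pow_mul_nonpos_of_toLex_le_zero (toLex_ite_le_zero (hf l) i)
  obtain ⟨ε, hεl, hε⟩ := (hev.and self_mem_nhdsWithin).exists
  refine ⟨∑ j : Fin r, (if (j : ℕ) ≤ i then ε ^ (j : ℕ) else 0) • v j,
    sum_smul_mem_intrinsicInterior_coneGenUpTo hv (fun j hj => ?_) (fun j hj => ?_), fun l => ?_⟩
  · simpa [hj] using pow_pos (Set.mem_Ioi.1 hε) _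
  · simp [not_le.2 hj]
  · rw [map_sum]
    simpa only [map_smul, smul_eq_mul, ite_mul, mul_ite, zero_mul, mul_zero] using hεl l

end Cone

def pairELeft {n : ℕ} (u : ℝ × (Fin n → ℝ)) : (ℝ × (Fin n → ℝ)) →ₗ[ℝ] ℝ where
  toFun w := pairE w u
  map_add' w w' := by
    simp only [pairE, Prod.fst_add, Prod.snd_add, Pi.add_apply, add_mul, Finset.sum_add_distrib]
    ring
  map_smul' c w := by
    simp only [pairE, Prod.smul_fst, Prod.smul_snd, Pi.smul_apply, smul_eq_mul,
      RingHom.id_apply, mul_add, Finset.mul_sum, mul_assoc]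

theorem mem_cone_filter_iff_admissible_nbhd_general
    (n k : ℕ) (Γ : AddSubgroup ℝ)
    (v : Fin (k + 1) → ℝ × (Fin n → ℝ)) (hv : LinearIndependent ℝ v)
    (hvpos : ∀ i, 0 ≤ (v i).1)
    (U : Set (ℝ × (Fin n → ℝ))) (hU : IsGammaAdmissibleCone Γ U) :
    (∃ q : ℕ, ∃ γ : Fin q → ℝ, ∃ u : Fin q → (Fin n → ℤ), (∀ l, γ l ∈ Γ) ∧
      (∀ l, toLex (fun i : Fin (k + 1) => pairE (v i) (γ l, fun t => (u l t : ℝ))) ≤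
        toLex (0 : Fin (k + 1) → ℝ)) ∧
      {w : ℝ × (Fin n → ℝ) | 0 ≤ w.1 ∧
        ∀ l, pairE w (γ l, fun t => (u l t : ℝ)) ≤ 0} ⊆ U) ↔
    (∀ i ≤ k, (U ∩ intrinsicInterior ℝ (coneGenUpTo v i)).Nonempty) := by
  obtain ⟨q₀, γ₀, u₀, hγ₀, rfl⟩ := hU
  constructor
  · rintro ⟨q, γ, u, -, hlex, hsub⟩ i -
    obtain ⟨w, hw, hwl⟩ := exists_mem_intrinsicInterior_coneGenUpTo_forall_le_zero hv
      (fun l => pairELeft (γ l, fun t => (u l t : ℝ))) hlex i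
    have hw₁ : 0 ≤ w.1 := LinearMap.fst ℝ ℝ (Fin n → ℝ) |>.apply_nonneg_of_mem_coneGenUpTo
      (fun j _ => hvpos j) (intrinsicInterior_subset hw)
    exact ⟨w, hsub ⟨hw₁, hwl⟩, hw⟩
  · intro h
    -- `pairE w (γ, u)` unfolds to `w.1 * γ + pairZ w.2 u`: the inequalities defining `U` work.
    refine ⟨q₀, γ₀, u₀, hγ₀, fun l => ?_, fun w hw => hw⟩
    refine toLex_le_zero_of_forall_exists_mem_intrinsicInterior_coneGenUpTo (pairELeft _)
      fun i hi => ?_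
    obtain ⟨w, hwU, hw⟩ := h i (by omega)
    exact ⟨w, hw, hwU.2 l⟩

/-- For a simplicial flag of cones generated by linearly independent
`v 0, …, v k` in `ℝ≥0 × ℝⁿ` and a `Γ`-admissible cone `Ũ`, the following are equivalent:
(a) `Ũ` contains a finite intersection of `Γ`-admissible half-spaces `{⟨·,𝔲 l⟩ ≤ 0}` with
each `(⟨v 0,𝔲 l⟩,…,⟨v k,𝔲 l⟩) ≤_lex 0`; (b) `Ũ` meets the relative interior of every `C i`. -/
theorem mem_cone_filter_iff_admissible_nbhd
    (n k : ℕ) (hn : 1 ≤ n) (Γ : AddSubgroup ℝ) (hΓ : Γ ≠ ⊥)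
    (v : Fin (k + 1) → ℝ × (Fin n → ℝ)) (hv : LinearIndependent ℝ v)
    (hvpos : ∀ i, 0 ≤ (v i).1)
    (U : Set (ℝ × (Fin n → ℝ))) (hU : IsGammaAdmissibleCone Γ U) :
    (∃ q : ℕ, ∃ γ : Fin q → ℝ, ∃ u : Fin q → (Fin n → ℤ), (∀ l, γ l ∈ Γ) ∧
      (∀ l, toLex (fun i : Fin (k + 1) => pairE (v i) (γ l, fun t => (u l t : ℝ))) ≤
        toLex (0 : Fin (k + 1) → ℝ)) ∧
      {w : ℝ × (Fin n → ℝ) | 0 ≤ w.1 ∧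
        ∀ l, pairE w (γ l, fun t => (u l t : ℝ)) ≤ 0} ⊆ U) ↔
    (∀ i ≤ k, (U ∩ intrinsicInterior ℝ (coneGenUpTo v i)).Nonempty) :=
  mem_cone_filter_iff_admissible_nbhd_general n k Γ v hv hvpos U hU
end
end

section
/- The map F ↦ {U ∈ F : U is a Γ-rational polytopal set} is a bijection from the set of prime filters on the lattice of Γ-rational polyhedral sets in ℝⁿ that contain a Γ-rational polytope onto the set of prime filters on the lattice of Γ-rational polytopal sets in ℝⁿ. Its inverse sends a prime filter G on the lattice of Γ-rational polytopal sets to the collection of all Γ-rational polyhedral sets that contain some member of G. -/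
open Finset

noncomputable section

/-- Prime filters on the lattice of `Γ`-rational polyhedral sets that contain a polytope. -/
def PolyhedralPrimeFiltersWithPolytope (n : ℕ) (Γ : AddSubgroup ℝ) :
    Set (Set (Set (Fin n → ℝ))) :=
  {F | IsPrimeFilterOn {U : Set (Fin n → ℝ) | IsGammaRatPolyhedralSet Γ U} F ∧
    ∃ U ∈ F, IsGammaRatPolytope Γ U}

/-- Prime filters on the lattice of `Γ`-rational polytopal sets. -/
def PolytopalPrimeFilters (n : ℕ) (Γ : AddSubgroup ℝ) : Set (Set (Set (Fin n → ℝ))) :=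
  {G | IsPrimeFilterOn {U : Set (Fin n → ℝ) | IsGammaRatPolytopalSet Γ U} G}

/-- The restriction map `F ↦ {U ∈ F : U polytopal}`. -/
def restrictToPolytopal (n : ℕ) (Γ : AddSubgroup ℝ) (F : Set (Set (Fin n → ℝ))) :
    Set (Set (Fin n → ℝ)) :=
  {U ∈ F | IsGammaRatPolytopalSet Γ U}

/-- The extension map sending `G` to the polyhedral sets containing some member of `G`. -/
def extendToPolyhedral (n : ℕ) (Γ : AddSubgroup ℝ) (G : Set (Set (Fin n → ℝ))) :
    Set (Set (Fin n → ℝ)) :=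
  {U | IsGammaRatPolyhedralSet Γ U ∧ ∃ V ∈ G, V ⊆ U}

/-!
A polytopal set is polyhedral, and the intersection of a polytopal set with a polyhedral set is
polytopal. So a filter `F` on polyhedral sets containing a polytope `P` is determined by its
polytopal members, since `U ∈ F ↔ P ∩ U ∈ F`; conversely, the polyhedral sets lying above a prime
filter `G` on polytopal sets form a prime filter whose polytopal members are exactly `G`. A prime
filter containing a finite union contains one of its pieces, so this extension contains a
polytope.
-/

section PrimeFilter

variable {α : Type*}

def finiteUnions (P : Set (Set α)) : Set (Set α) :=
  {U | ∃ m, ∃ Q : Fin m → Set α, (∀ j, Q j ∈ P) ∧ U = ⋃ j, Q j}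

theorem subset_finiteUnions (P : Set (Set α)) : P ⊆ finiteUnions P :=
  fun A hA => ⟨1, fun _ => A, fun _ => hA, (Set.iUnion_const A).symm⟩

theorem finiteUnions_mono {P P' : Set (Set α)} (h : P ⊆ P') :
    finiteUnions P ⊆ finiteUnions P' := by
  rintro _ ⟨m, Q, hQ, rfl⟩
  exact ⟨m, Q, fun j => h (hQ j), rfl⟩

theorem inter_mem_finiteUnions {P P' P'' : Set (Set α)} (h : ∀ A ∈ P, ∀ B ∈ P', A ∩ B ∈ P'')
    {U V : Set α} (hU : U ∈ finiteUnions P) (hV : V ∈ finiteUnions P') :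
    U ∩ V ∈ finiteUnions P'' := by
  obtain ⟨m₁, Q₁, hQ₁, rfl⟩ := hU
  obtain ⟨m₂, Q₂, hQ₂, rfl⟩ := hV
  refine ⟨m₁ * m₂, fun j => Q₁ (finProdFinEquiv.symm j).1 ∩ Q₂ (finProdFinEquiv.symm j).2,
    fun j => h _ (hQ₁ _) _ (hQ₂ _), ?_⟩
  rw [Set.iUnion_inter_iUnion, ← Set.iUnion_prod' fun p => Q₁ p.1 ∩ Q₂ p.2]
  exact (finProdFinEquiv.symm.surjective.iUnion_comp fun p => Q₁ p.1 ∩ Q₂ p.2).symm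

def upperClosureIn (L G : Set (Set α)) : Set (Set α) :=
  {U ∈ L | ∃ V ∈ G, V ⊆ U}

namespace IsPrimeFilterOn

variable {L Lp F G : Set (Set α)}

theorem empty_notMem (hF : IsPrimeFilterOn L F) : ∅ ∉ F := by
  obtain ⟨hFL, -, hFne, hup, -, -⟩ := hF
  exact fun h => hFne (subset_antisymm hFL fun U hU => hup ∅ h U hU (Set.empty_subset U))

theorem exists_mem_of_iUnion_mem {P : Set (Set α)} (hF : IsPrimeFilterOn (finiteUnions P) F)
    {m : ℕ} {Q : Fin m → Set α} (hQ : ∀ j, Q j ∈ P) (h : ⋃ j, Q j ∈ F) : ∃ j, Q j ∈ F := by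
  induction m with
  | zero => exact absurd (by simpa using h) hF.empty_notMem
  | succ m ih =>
    obtain ⟨-, -, -, -, -, hprime⟩ := hF
    rw [Set.iUnion_fin_add_one_eq_iUnion_succ] at h
    rcases hprime _ (subset_finiteUnions P (hQ 0)) _ ⟨m, _, fun j => hQ j.succ, rfl⟩ h with
      h₀ | hsucc
    · exact ⟨0, h₀⟩
    · obtain ⟨j, hj⟩ := ih (fun j => hQ j.succ) hsucc
      exact ⟨j.succ, hj⟩

theorem exists_mem_of_finiteUnions {P : Set (Set α)}
    (hF : IsPrimeFilterOn (finiteUnions P) F) : ∃ A ∈ P, A ∈ F := by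
  obtain ⟨V, hV⟩ := hF.2.1
  obtain ⟨m, Q, hQ, rfl⟩ := hF.1 hV
  obtain ⟨j, hj⟩ := hF.exists_mem_of_iUnion_mem hQ hV
  exact ⟨Q j, hQ j, hj⟩

end IsPrimeFilterOn

variable {L Lp F G : Set (Set α)}

theorem IsPrimeFilterOn.inter (hF : IsPrimeFilterOn L F) (hLpL : ∀ U ∈ Lp, ∀ V ∈ L, U ∩ V ∈ Lp)
    (hLp : Lp ⊆ L) (hmeet : (F ∩ Lp).Nonempty) : IsPrimeFilterOn Lp (F ∩ Lp) := by
  obtain ⟨hFL, -, hFne, hup, hinter, hprime⟩ := hF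
  obtain ⟨U₀, hU₀F, hU₀⟩ := hmeet
  refine ⟨Set.inter_subset_right, ⟨U₀, hU₀F, hU₀⟩, ?_, ?_, ?_, ?_⟩
  · -- `U₀ ∩ V` is a member of `Lp` outside `F` for any `V ∈ L \ F`.
    obtain ⟨V, hVL, hVF⟩ := Set.exists_of_ssubset (hFL.ssubset_of_ne hFne)
    intro h
    have hU₀V : U₀ ∩ V ∈ F ∩ Lp := by rw [h]; exact hLpL U₀ hU₀ V hVL
    exact hVF (hup _ hU₀V.1 V hVL Set.inter_subset_right)
  · exact fun U hU V hV hUV => ⟨hup U hU.1 V (hLp hV) hUV, hV⟩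
  · exact fun U hU V hV => ⟨hinter U hU.1 V hV.1, hLpL U hU.2 V (hFL hV.1)⟩
  · exact fun U hU V hV hUV => (hprime U (hLp hU) V (hLp hV) hUV.1).imp (⟨·, hU⟩) (⟨·, hV⟩)

theorem isPrimeFilterOn_upperClosureIn (hG : IsPrimeFilterOn Lp G)
    (hL : ∀ U ∈ L, ∀ V ∈ L, U ∩ V ∈ L) (hLpL : ∀ U ∈ Lp, ∀ V ∈ L, U ∩ V ∈ Lp) (hLp : Lp ⊆ L) :
    IsPrimeFilterOn L (upperClosureIn L G) := by
  obtain ⟨hGLp, ⟨V₀, hV₀⟩, hGne, hup, hinter, hprime⟩ := hG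
  refine ⟨fun U hU => hU.1, ⟨V₀, hLp (hGLp hV₀), V₀, hV₀, subset_rfl⟩, ?_, ?_, ?_, ?_⟩
  · obtain ⟨W, hWLp, hWG⟩ := Set.exists_of_ssubset (hGLp.ssubset_of_ne hGne)
    intro h
    obtain ⟨-, V, hV, hVW⟩ : W ∈ upperClosureIn L G := by rw [h]; exact hLp hWLp
    exact hWG (hup V hV W hWLp hVW)
  · exact fun U ⟨_, V, hV, hVU⟩ W hW hUW => ⟨hW, V, hV, hVU.trans hUW⟩
  · exact fun U ⟨hU, V, hV, hVU⟩ W ⟨hW, V', hV', hV'W⟩ =>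
      ⟨hL U hU W hW, V ∩ V', hinter V hV V' hV', Set.inter_subset_inter hVU hV'W⟩
  · rintro U hU W hW ⟨-, V, hV, hVUW⟩
    have hsplit : (V ∩ U) ∪ (V ∩ W) ∈ G := by
      rwa [← Set.inter_union_distrib_left, Set.inter_eq_left.2 hVUW]
    exact (hprime _ (hLpL V (hGLp hV) U hU) _ (hLpL V (hGLp hV) W hW) hsplit).imp
      (⟨hU, _, ·, Set.inter_subset_right⟩) (⟨hW, _, ·, Set.inter_subset_right⟩)

theorem upperClosureIn_inter_eq (hF : IsPrimeFilterOn L F)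
    (hLpL : ∀ U ∈ Lp, ∀ V ∈ L, U ∩ V ∈ Lp) (hmeet : (F ∩ Lp).Nonempty) :
    upperClosureIn L (F ∩ Lp) = F := by
  obtain ⟨hFL, -, -, hup, hinter, -⟩ := hF
  obtain ⟨U₀, hU₀F, hU₀⟩ := hmeet
  ext U
  refine ⟨fun ⟨hU, V, hV, hVU⟩ => hup V hV.1 U hU hVU, fun hU => ?_⟩
  exact ⟨hFL hU, U₀ ∩ U, ⟨hinter U₀ hU₀F U hU, hLpL U₀ hU₀ U (hFL hU)⟩, Set.inter_subset_right⟩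

theorem upperClosureIn_inter_eq_self (hG : IsPrimeFilterOn Lp G) (hLp : Lp ⊆ L) :
    upperClosureIn L G ∩ Lp = G := by
  obtain ⟨hGLp, -, -, hup, -, -⟩ := hG
  ext U
  refine ⟨fun ⟨⟨_, V, hV, hVU⟩, hU⟩ => hup V hV U hU hVU, fun hU => ?_⟩
  exact ⟨⟨hLp (hGLp hU), U, hU, subset_rfl⟩, hGLp hU⟩

end PrimeFilter

section GammaRational

variable {n : ℕ} {Γ : AddSubgroup ℝ}

theorem IsGammaRatPolyhedron.inter {Q R : Set (Fin n → ℝ)} (hQ : IsGammaRatPolyhedron Γ Q)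
    (hR : IsGammaRatPolyhedron Γ R) : IsGammaRatPolyhedron Γ (Q ∩ R) := by
  obtain ⟨q₁, u₁, γ₁, hγ₁, rfl⟩ := hQ
  obtain ⟨q₂, u₂, γ₂, hγ₂, rfl⟩ := hR
  refine ⟨q₁ + q₂, Fin.append u₁ u₂, Fin.append γ₁ γ₂, ?_, ?_⟩
  · simpa [Fin.forall_fin_add] using And.intro hγ₁ hγ₂
  · ext x
    simp [Fin.forall_fin_add]

theorem IsGammaRatPolytope.inter {Q R : Set (Fin n → ℝ)} (hQ : IsGammaRatPolytope Γ Q)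
    (hR : IsGammaRatPolyhedron Γ R) : IsGammaRatPolytope Γ (Q ∩ R) :=
  ⟨hQ.1.inter hR, hQ.2.subset Set.inter_subset_left⟩

theorem isGammaRatPolyhedralSet_iff {U : Set (Fin n → ℝ)} :
    IsGammaRatPolyhedralSet Γ U ↔ U ∈ finiteUnions {Q | IsGammaRatPolyhedron Γ Q} :=
  Iff.rfl

theorem isGammaRatPolytopalSet_iff {U : Set (Fin n → ℝ)} :
    IsGammaRatPolytopalSet Γ U ↔ U ∈ finiteUnions {Q | IsGammaRatPolytope Γ Q} :=
  Iff.rfl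

theorem IsGammaRatPolyhedralSet.inter {U V : Set (Fin n → ℝ)}
    (hU : IsGammaRatPolyhedralSet Γ U) (hV : IsGammaRatPolyhedralSet Γ V) :
    IsGammaRatPolyhedralSet Γ (U ∩ V) :=
  isGammaRatPolyhedralSet_iff.2 <|
    inter_mem_finiteUnions (fun _ hA _ hB => IsGammaRatPolyhedron.inter hA hB)
      (isGammaRatPolyhedralSet_iff.1 hU) (isGammaRatPolyhedralSet_iff.1 hV)

theorem IsGammaRatPolytopalSet.inter {U V : Set (Fin n → ℝ)}
    (hU : IsGammaRatPolytopalSet Γ U) (hV : IsGammaRatPolyhedralSet Γ V) :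
    IsGammaRatPolytopalSet Γ (U ∩ V) :=
  isGammaRatPolytopalSet_iff.2 <|
    inter_mem_finiteUnions (fun _ hA _ hB => IsGammaRatPolytope.inter hA hB)
      (isGammaRatPolytopalSet_iff.1 hU) (isGammaRatPolyhedralSet_iff.1 hV)

theorem IsGammaRatPolytopalSet.isGammaRatPolyhedralSet {U : Set (Fin n → ℝ)}
    (hU : IsGammaRatPolytopalSet Γ U) : IsGammaRatPolyhedralSet Γ U :=
  isGammaRatPolyhedralSet_iff.2 <|
    finiteUnions_mono (fun _ hQ => hQ.1) (isGammaRatPolytopalSet_iff.1 hU)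

theorem IsGammaRatPolyhedron.isGammaRatPolyhedralSet {Q : Set (Fin n → ℝ)}
    (hQ : IsGammaRatPolyhedron Γ Q) : IsGammaRatPolyhedralSet Γ Q :=
  subset_finiteUnions {Q | IsGammaRatPolyhedron Γ Q} hQ

theorem IsGammaRatPolytope.isGammaRatPolytopalSet {Q : Set (Fin n → ℝ)}
    (hQ : IsGammaRatPolytope Γ Q) : IsGammaRatPolytopalSet Γ Q :=
  subset_finiteUnions {Q | IsGammaRatPolytope Γ Q} hQ

variable {F G : Set (Set (Fin n → ℝ))}

theorem restrictToPolytopal_mem (hF : F ∈ PolyhedralPrimeFiltersWithPolytope n Γ) :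
    restrictToPolytopal n Γ F ∈ PolytopalPrimeFilters n Γ := by
  obtain ⟨hF, P, hPF, hP⟩ := hF
  exact hF.inter (fun _ hU _ hV => IsGammaRatPolytopalSet.inter hU hV)
    (fun _ hU => IsGammaRatPolytopalSet.isGammaRatPolyhedralSet hU)
    ⟨P, hPF, hP.isGammaRatPolytopalSet⟩

theorem extendToPolyhedral_mem (hG : G ∈ PolytopalPrimeFilters n Γ) :
    extendToPolyhedral n Γ G ∈ PolyhedralPrimeFiltersWithPolytope n Γ := by
  obtain ⟨P, hP, hPG⟩ :=
    IsPrimeFilterOn.exists_mem_of_finiteUnions (P := {Q | IsGammaRatPolytope Γ Q}) hG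
  refine ⟨isPrimeFilterOn_upperClosureIn hG
    (fun _ hU _ hV => IsGammaRatPolyhedralSet.inter hU hV)
    (fun _ hU _ hV => IsGammaRatPolytopalSet.inter hU hV)
    (fun _ hU => IsGammaRatPolytopalSet.isGammaRatPolyhedralSet hU), P, ?_, hP⟩
  exact ⟨hP.1.isGammaRatPolyhedralSet, P, hPG, subset_rfl⟩

theorem extendToPolyhedral_restrictToPolytopal
    (hF : F ∈ PolyhedralPrimeFiltersWithPolytope n Γ) :
    extendToPolyhedral n Γ (restrictToPolytopal n Γ F) = F := by
  obtain ⟨hF, P, hPF, hP⟩ := hF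
  exact upperClosureIn_inter_eq hF (fun _ hU _ hV => IsGammaRatPolytopalSet.inter hU hV)
    ⟨P, hPF, hP.isGammaRatPolytopalSet⟩

theorem restrictToPolytopal_extendToPolyhedral (hG : G ∈ PolytopalPrimeFilters n Γ) :
    restrictToPolytopal n Γ (extendToPolyhedral n Γ G) = G :=
  upperClosureIn_inter_eq_self hG fun _ hU => IsGammaRatPolytopalSet.isGammaRatPolyhedralSet hU

end GammaRational

theorem restrictToPolytopal_bijOn_with_inverse_general
    (n : ℕ) (Γ : AddSubgroup ℝ) :
    Set.BijOn (restrictToPolytopal n Γ) (PolyhedralPrimeFiltersWithPolytope n Γ)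
      (PolytopalPrimeFilters n Γ) ∧
    (∀ G ∈ PolytopalPrimeFilters n Γ,
      extendToPolyhedral n Γ G ∈ PolyhedralPrimeFiltersWithPolytope n Γ) ∧
    (∀ F ∈ PolyhedralPrimeFiltersWithPolytope n Γ,
      extendToPolyhedral n Γ (restrictToPolytopal n Γ F) = F) ∧
    (∀ G ∈ PolytopalPrimeFilters n Γ,
      restrictToPolytopal n Γ (extendToPolyhedral n Γ G) = G) :=
  ⟨Set.InvOn.bijOn ⟨fun _ => extendToPolyhedral_restrictToPolytopal,
      fun _ => restrictToPolytopal_extendToPolyhedral⟩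
    (fun _ => restrictToPolytopal_mem) (fun _ => extendToPolyhedral_mem),
   fun _ => extendToPolyhedral_mem, fun _ => extendToPolyhedral_restrictToPolytopal,
   fun _ => restrictToPolytopal_extendToPolyhedral⟩

/-- `F ↦ {U ∈ F : U polytopal}` is a bijection from the prime filters on the
lattice of `Γ`-rational polyhedral sets containing a polytope onto the prime filters on the
lattice of `Γ`-rational polytopal sets, with inverse `G ↦ {polyhedral sets containing some
member of G}`. -/
theorem restrictToPolytopal_bijOn_with_inverse
    (n : ℕ) (hn : 1 ≤ n) (Γ : AddSubgroup ℝ) (hΓ : Γ ≠ ⊥) :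
    Set.BijOn (restrictToPolytopal n Γ) (PolyhedralPrimeFiltersWithPolytope n Γ)
      (PolytopalPrimeFilters n Γ) ∧
    (∀ G ∈ PolytopalPrimeFilters n Γ,
      extendToPolyhedral n Γ G ∈ PolyhedralPrimeFiltersWithPolytope n Γ) ∧
    (∀ F ∈ PolyhedralPrimeFiltersWithPolytope n Γ,
      extendToPolyhedral n Γ (restrictToPolytopal n Γ F) = F) ∧
    (∀ G ∈ PolytopalPrimeFilters n Γ,
      restrictToPolytopal n Γ (extendToPolyhedral n Γ G) = G) :=
  restrictToPolytopal_bijOn_with_inverse_general n Γ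

end
end
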